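/- arXiv:2109.09657 — 10 statements merged into one kernel-verified Lean document; each statement's English description precedes it below -/
import Mathlib

section
/- Let n ∈ ℕ and let I be a finite nonempty index set. For each i ∈ I let A_i be a real m_i × n matrix, b_i ∈ ℝ^{m_i}, and K_i ⊆ ℝ^{m_i} a proper cone (closed, convex, pointed, with nonempty interior), and set P_i = {x ∈ ℝ^n : A_i x − b_i ∈ K_i}. Let P = {(x, (v_i)_{i∈I}, (λ_i)_{i∈I}) : x = Σ_{i∈I} v_i, Σ_{i∈I} λ_i = 1, λ_i ≥ 0 for all i ∈ I, and A_i v_i − λ_i b_i ∈ K_i for all i ∈ I}. If P_i ≠ ∅ for every i ∈ I, then the projection of P onto the x coordinates is contained in the closure of the convex hull of ⋃_{i∈I} P_i, i.e. proj_x(P) ⊆ cl conv(⋃_{i∈I} P_i). -/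
/-!
Fix `pᵢ ∈ Pᵢ`. For `ε > 0` the point `(λᵢ + ε)⁻¹ (vᵢ + ε pᵢ)` lies in `Pᵢ`, also when `λᵢ = 0`,
because `K i` is a convex cone. The convex combination of these points with weights
proportional to `λᵢ + ε` is `(1 + |I| ε)⁻¹ (x + ε ∑ pᵢ)`, which tends to `x` as `ε → 0⁺`.
-/

open Matrix Filter Topology Set

section ConeConstraint

variable {E F : Type*} [AddCommGroup E] [Module ℝ E] [AddCommGroup F] [Module ℝ F]
  {K : Set F}

theorem add_mem_of_convex_of_smul_mem (hconv : Convex ℝ K)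
    (hcone : ∀ z ∈ K, ∀ c : ℝ, 0 ≤ c → c • z ∈ K) {z w : F} (hz : z ∈ K) (hw : w ∈ K) :
    z + w ∈ K := by
  have hmid : (1 / 2 : ℝ) • z + (1 / 2 : ℝ) • w ∈ K :=
    hconv hz hw (by norm_num) (by norm_num) (by norm_num)
  convert hcone _ hmid 2 (by norm_num) using 1
  module

theorem inv_smul_add_smul_mem_of_homogenized (f : E →ₗ[ℝ] F) (hconv : Convex ℝ K)
    (hcone : ∀ z ∈ K, ∀ c : ℝ, 0 ≤ c → c • z ∈ K) {b : F} {v x : E} {lam ε : ℝ}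
    (hlam : 0 ≤ lam) (hε : 0 < ε) (hv : f v - lam • b ∈ K) (hx : f x - b ∈ K) :
    f ((lam + ε)⁻¹ • (v + ε • x)) - b ∈ K := by
  have hpos : 0 < lam + ε := by linarith
  have hrepr : f ((lam + ε)⁻¹ • (v + ε • x)) - b
      = (lam + ε)⁻¹ • ((f v - lam • b) + ε • (f x - b)) := by
    rw [map_smul, map_add, map_smul]
    match_scalars <;> field_simp; ring
  rw [hrepr]
  exact hcone _ (add_mem_of_convex_of_smul_mem hconv hcone hv (hcone _ hx ε hε.le)) _
    (inv_nonneg.2 hpos.le)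

end ConeConstraint

section Perturbation

variable {ι E : Type*} [Fintype ι] [AddCommGroup E] [Module ℝ E]

theorem centerMass_add_const_perspective_eq {lam : ι → ℝ} (hsum : ∑ i, lam i = 1)
    (hlam : ∀ i, 0 ≤ lam i) {ε : ℝ} (hε : 0 < ε) (v p : ι → E) :
    Finset.univ.centerMass (fun i => lam i + ε) (fun i => (lam i + ε)⁻¹ • (v i + ε • p i))
      = (1 + (Fintype.card ι : ℝ) * ε)⁻¹ • (∑ i, v i + ε • ∑ i, p i) := by
  have hweights : ∑ i, (lam i + ε) = 1 + Fintype.card ι * ε := by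
    rw [Finset.sum_add_distrib, hsum, Finset.sum_const, Finset.card_univ, nsmul_eq_mul]
  have hterm : ∀ i, (lam i + ε) • (lam i + ε)⁻¹ • (v i + ε • p i) = v i + ε • p i := fun i =>
    smul_inv_smul₀ (by linarith [hlam i] : 0 < lam i + ε).ne' _
  simp only [Finset.centerMass, hweights, hterm, Finset.sum_add_distrib, Finset.smul_sum]

theorem tendsto_inv_smul_add_smul_nhds_zero [TopologicalSpace E] [IsTopologicalAddGroup E]
    [ContinuousSMul ℝ E] (c : ℝ) (x y : E) :
    Tendsto (fun ε : ℝ => (1 + c * ε)⁻¹ • (x + ε • y)) (𝓝 0) (𝓝 x) := by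
  have hcont : ContinuousAt (fun ε : ℝ => (1 + c * ε)⁻¹ • (x + ε • y)) 0 :=
    ((continuousAt_const.add (continuousAt_const.mul continuousAt_id)).inv₀ (by simp)).smul
      (continuousAt_const.add (continuousAt_id.smul continuousAt_const))
  simpa using hcont.tendsto

end Perturbation

theorem proj_hull_subset_closure_conv_union_general
    {n : ℕ} {I : Type*} [Fintype I]
    (m : I → ℕ)
    (A : ∀ i : I, Matrix (Fin (m i)) (Fin n) ℝ)
    (b : ∀ i : I, Fin (m i) → ℝ)
    (K : ∀ i : I, Set (Fin (m i) → ℝ))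
    (hKconvex : ∀ i, Convex ℝ (K i))
    (hKcone : ∀ i, ∀ z ∈ K i, ∀ c : ℝ, 0 ≤ c → c • z ∈ K i)
    (hPne : ∀ i, ({x : Fin n → ℝ | A i *ᵥ x - b i ∈ K i}).Nonempty) :
    {x : Fin n → ℝ | ∃ (v : I → (Fin n → ℝ)) (lam : I → ℝ),
        x = ∑ i : I, v i ∧
        ∑ i : I, lam i = 1 ∧
        (∀ i : I, 0 ≤ lam i) ∧
        (∀ i : I, A i *ᵥ v i - lam i • b i ∈ K i)} ⊆
      closure (convexHull ℝ (⋃ i : I, {x : Fin n → ℝ | A i *ᵥ x - b i ∈ K i})) := by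
  rintro _ ⟨v, lam, rfl, hsum, hlam, hv⟩
  choose p hp using hPne
  have hmem : ∀ ε > 0, (1 + (Fintype.card I : ℝ) * ε)⁻¹ • (∑ i, v i + ε • ∑ i, p i) ∈
      convexHull ℝ (⋃ i : I, {x : Fin n → ℝ | A i *ᵥ x - b i ∈ K i}) := by
    intro ε hε
    rw [← centerMass_add_const_perspective_eq hsum hlam hε]
    refine Finset.centerMass_mem_convexHull _ (fun i _ => by linarith [hlam i]) ?_
      fun i _ => mem_iUnion_of_mem i ?_
    · exact one_pos.trans_le (hsum ▸ Finset.sum_le_sum fun i _ => by linarith)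
    · exact inv_smul_add_smul_mem_of_homogenized (A i).mulVecLin (hKconvex i) (hKcone i)
        (hlam i) hε (hv i) (hp i)
  exact mem_closure_of_tendsto
    ((tendsto_inv_smul_add_smul_nhds_zero _ _ _).mono_left nhdsWithin_le_nhds)
    (eventually_nhdsWithin_of_forall (s := Ioi 0) hmem)

/-- If each disjunct `P i = {x | A i x - b i ∈ K i}` (with `K i`
a proper cone) is nonempty, then the projection onto `x` of the hull-reformulation
set is contained in the closure of the convex hull of the union of the disjuncts. -/
theorem proj_hull_subset_closure_conv_union
    {n : ℕ} {I : Type*} [Fintype I] [Nonempty I]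
    (m : I → ℕ)
    (A : ∀ i : I, Matrix (Fin (m i)) (Fin n) ℝ)
    (b : ∀ i : I, Fin (m i) → ℝ)
    (K : ∀ i : I, Set (Fin (m i) → ℝ))
    (hKclosed : ∀ i, IsClosed (K i))
    (hKconvex : ∀ i, Convex ℝ (K i))
    (hKcone : ∀ i, ∀ z ∈ K i, ∀ c : ℝ, 0 ≤ c → c • z ∈ K i)
    (hKpointed : ∀ i, K i ∩ (-(K i)) = {0})
    (hKint : ∀ i, (interior (K i)).Nonempty)
    (hPne : ∀ i, ({x : Fin n → ℝ | A i *ᵥ x - b i ∈ K i}).Nonempty) :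
    {x : Fin n → ℝ | ∃ (v : I → (Fin n → ℝ)) (lam : I → ℝ),
        x = ∑ i : I, v i ∧
        ∑ i : I, lam i = 1 ∧
        (∀ i : I, 0 ≤ lam i) ∧
        (∀ i : I, A i *ᵥ v i - lam i • b i ∈ K i)} ⊆
      closure (convexHull ℝ (⋃ i : I, {x : Fin n → ℝ | A i *ᵥ x - b i ∈ K i})) :=
  proj_hull_subset_closure_conv_union_general m A b K hKconvex hKcone hPne
end

section
/- Let n ∈ ℕ and let I be a finite nonempty index set. For each i ∈ I let A_i be a real m_i × n matrix, b_i ∈ ℝ^{m_i}, and K_i ⊆ ℝ^{m_i} a proper cone (closed, convex, pointed, with nonempty interior), and set P_i = {x ∈ ℝ^n : A_i x − b_i ∈ K_i}. Let P = {(x, (v_i)_{i∈I}, (λ_i)_{i∈I}) : x = Σ_{i∈I} v_i, Σ_{i∈I} λ_i = 1, λ_i ≥ 0 for all i ∈ I, and A_i v_i − λ_i b_i ∈ K_i for all i ∈ I}. Suppose there exist a convex closed set W ⊆ ℝ^n and, for each i ∈ I, a closed, bounded, convex, nonempty set S_i ⊆ ℝ^n such that P_i = S_i + W (Minkowski sum).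 Then conv(⋃_{i∈I} P_i) = proj_x(P) = cl conv(⋃_{i∈I} P_i). -/
/-!
Each `K i` is a convex cone, so a point `∑ i, v i` of the hull reformulation splits disjunct by
disjunct: a block with `lam i > 0` gives `v i ∈ lam i • (S i + W)`, and a block with `lam i = 0`
has `A i v i ∈ K i`, which makes `v i` a recession direction of `P i` and hence, `S i` being
bounded, of `W`. So the projection lies in `C + W`, where
`C = {∑ i, lam i • s i | lam ∈ stdSimplex, s i ∈ S i} ⊆ conv (⋃ i, S i)` is compact. As
`conv (⋃ i, P i) = conv (⋃ i, S i) + W` is always contained in the projection, all these sets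
coincide, and `C + W` is closed as the sum of a compact and a closed set.
-/

open Matrix Pointwise

open Set Filter Topology Bornology

section Cone

variable {F : Type*} [AddCommGroup F] [Module ℝ F] {K : Set F}

theorem add_mem_of_convex_of_smul_mem_s2 (hKconv : Convex ℝ K)
    (hKcone : ∀ z ∈ K, ∀ c : ℝ, 0 ≤ c → c • z ∈ K) {z₁ z₂ : F} (h₁ : z₁ ∈ K) (h₂ : z₂ ∈ K) :
    z₁ + z₂ ∈ K := by
  have hmid := hKconv h₁ h₂ (by norm_num : (0 : ℝ) ≤ 1 / 2) (by norm_num : (0 : ℝ) ≤ 1 / 2)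
    (by norm_num)
  convert hKcone _ hmid 2 (by norm_num) using 1
  module

theorem zero_mem_of_smul_mem (hKne : K.Nonempty)
    (hKcone : ∀ z ∈ K, ∀ c : ℝ, 0 ≤ c → c • z ∈ K) : (0 : F) ∈ K := by
  obtain ⟨z, hz⟩ := hKne
  simpa using hKcone z hz 0 le_rfl

end Cone

section Recession

/-- For closed convex nonempty `W` this is the usual recession cone. -/
def recessionCone {E : Type*} [AddMonoid E] (W : Set E) : AddSubmonoid E where
  carrier := {u | ∀ w ∈ W, w + u ∈ W}
  add_mem' hu hv w hw := add_assoc w _ _ ▸ hv _ (hu w hw)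
  zero_mem' w hw := (add_zero w).symm ▸ hw

variable {E : Type*} [NormedAddCommGroup E] [NormedSpace ℝ E] {S W : Set E}

/-- `w + v` is the limit of the points `(1 - 1/k) • w + (1/k) • (c + k • v - s_k)` of `W`. -/
theorem mem_recessionCone_of_forall_nat_add_smul_mem_add (hS : IsBounded S) (hWc : IsClosed W)
    (hWconv : Convex ℝ W) {c v : E} (h : ∀ k : ℕ, c + (k : ℝ) • v ∈ S + W) :
    v ∈ recessionCone W := by
  intro w hw
  choose s hs w' hw' hsw using fun k => mem_add.1 (h k)
  have hmem : ∀ k : ℕ, 1 ≤ k → w + v + (k : ℝ)⁻¹ • (c - s k - w) ∈ W := by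
    intro k hk
    have hk₀ : (k : ℝ) ≠ 0 := by positivity
    have hseg := hWconv hw (hw' k) (sub_nonneg.2 (inv_le_one_of_one_le₀ (by exact_mod_cast hk)))
      (inv_nonneg.2 k.cast_nonneg) (sub_add_cancel _ _)
    convert hseg using 1
    rw [eq_sub_of_add_eq' (hsw k)]
    simp only [smul_sub, smul_add, smul_smul, inv_mul_cancel₀ hk₀, one_smul]
    module
  obtain ⟨C, hC⟩ := isBounded_iff_forall_norm_le.1 hS
  have hbdd : IsBoundedUnder (· ≤ ·) atTop (fun k : ℕ => ‖c - s k - w‖) :=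
    isBoundedUnder_of ⟨‖c‖ + C + ‖w‖, fun k =>
      (norm_sub_le _ _).trans (by linarith [norm_sub_le c (s k), hC _ (hs k)])⟩
  have hlim : Tendsto (fun k : ℕ => w + v + (k : ℝ)⁻¹ • (c - s k - w)) atTop (𝓝 (w + v)) := by
    simpa using tendsto_const_nhds.add
      (tendsto_inv_atTop_nhds_zero_nat.zero_smul_isBoundedUnder_le hbdd)
  exact hWc.mem_of_tendsto hlim (eventually_atTop.2 ⟨1, hmem⟩)

end Recession

section Homogenization

variable {E F : Type*} [AddCommGroup F] [Module ℝ F] {K : Set F} {b : F}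

theorem map_inv_smul_sub_mem [AddCommGroup E] [Module ℝ E] {f : E →ₗ[ℝ] F}
    (hKcone : ∀ z ∈ K, ∀ c : ℝ, 0 ≤ c → c • z ∈ K) {v : E} {lam : ℝ} (hlam : 0 < lam)
    (hv : f v - lam • b ∈ K) : f (lam⁻¹ • v) - b ∈ K := by
  convert hKcone _ hv lam⁻¹ (inv_nonneg.2 hlam.le) using 1
  rw [map_smul, smul_sub, smul_smul, inv_mul_cancel₀ hlam.ne', one_smul]

theorem mem_recessionCone_of_map_mem [NormedAddCommGroup E] [NormedSpace ℝ E] {f : E →ₗ[ℝ] F}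
    {S W : Set E} (hKconv : Convex ℝ K) (hKcone : ∀ z ∈ K, ∀ c : ℝ, 0 ≤ c → c • z ∈ K)
    (hP : {x | f x - b ∈ K} = S + W) (hS : IsBounded S) (hSne : S.Nonempty) (hWc : IsClosed W)
    (hWconv : Convex ℝ W) {v : E} (hv : f v ∈ K) : v ∈ recessionCone W := by
  obtain ⟨s, hs⟩ := hSne
  intro w hw
  have hc : f (s + w) - b ∈ K := (hP ▸ add_mem_add hs hw :)
  refine mem_recessionCone_of_forall_nat_add_smul_mem_add hS hWc hWconv (c := s + w)
    (fun k => hP ▸ (?_ : f (s + w + (k : ℝ) • v) - b ∈ K)) w hw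
  convert add_mem_of_convex_of_smul_mem_s2 hKconv hKcone hc (hKcone _ hv k k.cast_nonneg) using 1
  simp only [map_add, map_smul]
  abel

end Homogenization

theorem Convex.sum_mem_of_weight_ne_zero {ι E : Type*} [Fintype ι] [AddCommGroup E] [Module ℝ E]
    {W : Set E} (hW : Convex ℝ W) {w : ι → ℝ} {z : ι → E} (h₀ : ∀ i, 0 ≤ w i)
    (h₁ : ∑ i, w i = 1) (hz : ∀ i, w i ≠ 0 → z i ∈ W) : ∑ i, w i • z i ∈ W := by
  simpa only [finsum_eq_sum_of_fintype] using
    hW.finsum_mem h₀ (by rwa [finsum_eq_sum_of_fintype]) hz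

section ConvexCombinations

variable {I E : Type*} [Fintype I] [AddCommGroup E] [Module ℝ E]

def convexCombinations (S : I → Set E) : Set E :=
  (fun p : (I → ℝ) × (I → E) => ∑ i, p.1 i • p.2 i) '' (stdSimplex ℝ I ×ˢ univ.pi S)

theorem convexCombinations_subset_convexHull (S : I → Set E) :
    convexCombinations S ⊆ convexHull ℝ (⋃ i, S i) := by
  rintro _ ⟨⟨w, s⟩, ⟨hw, hs⟩, rfl⟩
  exact (convex_convexHull ℝ _).sum_mem (fun i _ => hw.1 i) hw.2
    fun i _ => subset_convexHull ℝ _ (mem_iUnion.2 ⟨i, hs i (mem_univ i)⟩)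

theorem isCompact_convexCombinations [TopologicalSpace E] [ContinuousAdd E] [ContinuousSMul ℝ E]
    {S : I → Set E} (hS : ∀ i, IsCompact (S i)) : IsCompact (convexCombinations S) :=
  ((isCompact_stdSimplex ℝ I).prod (isCompact_univ_pi hS)).image (by fun_prop)

end ConvexCombinations

theorem convexHull_iUnion_add {ι E : Type*} [AddCommGroup E] [Module ℝ E] {S : ι → Set E}
    {W : Set E} (hW : Convex ℝ W) :
    convexHull ℝ (⋃ i, (S i + W)) = convexHull ℝ (⋃ i, S i) + W := by
  rw [← iUnion_add, convexHull_add, hW.convexHull_eq]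

section HullReformulation

variable {I E : Type*} {F : I → Type*} [Fintype I] [∀ i, AddCommGroup (F i)]
  [∀ i, Module ℝ (F i)] {K : ∀ i, Set (F i)} {b : ∀ i, F i}

/-- The projection onto `x` of the hull reformulation `P` of the disjunction of the conic
constraints `f i x - b i ∈ K i`. -/
def hullReformulation [AddCommGroup E] [Module ℝ E] (f : ∀ i, E →ₗ[ℝ] F i) (b : ∀ i, F i)
    (K : ∀ i, Set (F i)) : Set E :=
  {x | ∃ (v : I → E) (lam : I → ℝ), x = ∑ i, v i ∧ ∑ i, lam i = 1 ∧ (∀ i, 0 ≤ lam i) ∧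
    ∀ i, f i (v i) - lam i • b i ∈ K i}

section Module

variable [AddCommGroup E] [Module ℝ E] {f : ∀ i, E →ₗ[ℝ] F i}

theorem convex_hullReformulation (hKconv : ∀ i, Convex ℝ (K i)) :
    Convex ℝ (hullReformulation f b K) := by
  rintro _ ⟨v, lam, rfl, hsum, hnn, hmem⟩ _ ⟨u, mu, rfl, hsum', hnn', hmem'⟩ θ σ hθ hσ hθσ
  refine ⟨θ • v + σ • u, θ • lam + σ • mu, ?_, ?_, fun i => ?_, fun i => ?_⟩
  · simp only [Pi.add_apply, Pi.smul_apply, Finset.sum_add_distrib, Finset.smul_sum]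
  · simp only [Pi.add_apply, Pi.smul_apply, smul_eq_mul, Finset.sum_add_distrib, ← Finset.mul_sum,
      hsum, hsum', mul_one, hθσ]
  · exact add_nonneg (mul_nonneg hθ (hnn i)) (mul_nonneg hσ (hnn' i))
  · convert hKconv i (hmem i) (hmem' i) hθ hσ hθσ using 1
    simp only [Pi.add_apply, Pi.smul_apply, smul_eq_mul, map_add, map_smul, add_smul, smul_sub,
      mul_smul]
    abel

theorem setOf_map_sub_mem_subset_hullReformulation (h0 : ∀ i, 0 ∈ K i) (i : I) :
    {x | f i x - b i ∈ K i} ⊆ hullReformulation f b K := by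
  classical
  intro x hx
  refine ⟨Pi.single i x, Pi.single i 1, by simp, by simp, fun j => ?_, fun j => ?_⟩
  · by_cases h : j = i
    · subst h; simp
    · simp [h]
  · by_cases h : j = i
    · subst h; simpa using hx
    · simpa [h] using h0 j

theorem convexHull_iUnion_subset_hullReformulation (hKconv : ∀ i, Convex ℝ (K i))
    (h0 : ∀ i, 0 ∈ K i) :
    convexHull ℝ (⋃ i, {x | f i x - b i ∈ K i}) ⊆ hullReformulation f b K :=
  convexHull_min (iUnion_subset (setOf_map_sub_mem_subset_hullReformulation h0))
    (convex_hullReformulation hKconv)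

end Module

theorem hullReformulation_subset_convexCombinations_add [NormedAddCommGroup E] [NormedSpace ℝ E]
    {f : ∀ i, E →ₗ[ℝ] F i} {S : I → Set E} {W : Set E} (hKconv : ∀ i, Convex ℝ (K i))
    (hKcone : ∀ i, ∀ z ∈ K i, ∀ c : ℝ, 0 ≤ c → c • z ∈ K i)
    (hP : ∀ i, {x | f i x - b i ∈ K i} = S i + W) (hS : ∀ i, IsBounded (S i))
    (hSne : ∀ i, (S i).Nonempty) (hWc : IsClosed W) (hWconv : Convex ℝ W) :
    hullReformulation f b K ⊆ convexCombinations S + W := by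
  rintro _ ⟨v, lam, rfl, hsum, hnn, hmem⟩
  have hsplit : ∀ i, ∃ s ∈ S i, ∃ w, (lam i ≠ 0 → w ∈ W) ∧
      ∃ u ∈ recessionCone W, v i = lam i • s + lam i • w + u := by
    intro i
    rcases (hnn i).eq_or_lt with hzero | hpos
    · obtain ⟨s, hs⟩ := hSne i
      have hv : f i (v i) ∈ K i := by simpa [← hzero] using hmem i
      exact ⟨s, hs, 0, fun h => absurd hzero.symm h,
        v i, mem_recessionCone_of_map_mem (hKconv i) (hKcone i) (hP i) (hS i) ⟨s, hs⟩ hWc hWconv hv,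
        by simp [← hzero]⟩
    · have hv : (lam i)⁻¹ • v i ∈ S i + W := hP i ▸ map_inv_smul_sub_mem (hKcone i) hpos (hmem i)
      obtain ⟨s, hs, w, hw, hsw⟩ := mem_add.1 hv
      refine ⟨s, hs, w, fun _ => hw, 0, zero_mem _, ?_⟩
      rw [add_zero, ← smul_add, hsw, smul_smul, mul_inv_cancel₀ hpos.ne', one_smul]
  choose s hs w hw u hu hv using hsplit
  have hwW : ∑ i, lam i • w i ∈ W := hWconv.sum_mem_of_weight_ne_zero hnn hsum hw
  refine mem_add.2 ⟨∑ i, lam i • s i, ⟨(lam, s), ⟨⟨hnn, hsum⟩, fun i _ => hs i⟩, rfl⟩,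
    ∑ i, lam i • w i + ∑ i, u i, sum_mem (fun i _ => hu i) _ hwW, ?_⟩
  simp only [hv, Finset.sum_add_distrib, add_assoc]

end HullReformulation

theorem conv_union_eq_proj_hull_eq_closure_general
    {n : ℕ} {I : Type*} [Fintype I]
    (m : I → ℕ)
    (A : ∀ i : I, Matrix (Fin (m i)) (Fin n) ℝ)
    (b : ∀ i : I, Fin (m i) → ℝ)
    (K : ∀ i : I, Set (Fin (m i) → ℝ))
    (hKconvex : ∀ i, Convex ℝ (K i))
    (hKcone : ∀ i, ∀ z ∈ K i, ∀ c : ℝ, 0 ≤ c → c • z ∈ K i)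
    (hKint : ∀ i, (interior (K i)).Nonempty)
    (W : Set (Fin n → ℝ)) (hWconvex : Convex ℝ W) (hWclosed : IsClosed W)
    (S : I → Set (Fin n → ℝ))
    (hSclosed : ∀ i, IsClosed (S i))
    (hSbounded : ∀ i, Bornology.IsBounded (S i))
    (hSne : ∀ i, (S i).Nonempty)
    (hdecomp : ∀ i, {x : Fin n → ℝ | A i *ᵥ x - b i ∈ K i} = S i + W) :
    convexHull ℝ (⋃ i : I, {x : Fin n → ℝ | A i *ᵥ x - b i ∈ K i}) =
      {x : Fin n → ℝ | ∃ (v : I → (Fin n → ℝ)) (lam : I → ℝ),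
        x = ∑ i : I, v i ∧
        ∑ i : I, lam i = 1 ∧
        (∀ i : I, 0 ≤ lam i) ∧
        (∀ i : I, A i *ᵥ v i - lam i • b i ∈ K i)} ∧
    {x : Fin n → ℝ | ∃ (v : I → (Fin n → ℝ)) (lam : I → ℝ),
        x = ∑ i : I, v i ∧
        ∑ i : I, lam i = 1 ∧
        (∀ i : I, 0 ≤ lam i) ∧
        (∀ i : I, A i *ᵥ v i - lam i • b i ∈ K i)} =
      closure (convexHull ℝ (⋃ i : I, {x : Fin n → ℝ | A i *ᵥ x - b i ∈ K i})) := by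
  let f : ∀ i, (Fin n → ℝ) →ₗ[ℝ] Fin (m i) → ℝ := fun i => (A i).mulVecLin
  change convexHull ℝ (⋃ i, {x | f i x - b i ∈ K i}) = hullReformulation f b K ∧
    hullReformulation f b K = closure (convexHull ℝ (⋃ i, {x | f i x - b i ∈ K i}))
  have hK0 : ∀ i, (0 : Fin (m i) → ℝ) ∈ K i := fun i =>
    zero_mem_of_smul_mem ((hKint i).mono interior_subset) (hKcone i)
  have hP : ∀ i, {x | f i x - b i ∈ K i} = S i + W := hdecomp
  have hhull : convexHull ℝ (⋃ i, {x | f i x - b i ∈ K i}) = convexHull ℝ (⋃ i, S i) + W := by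
    simp_rw [hP, convexHull_iUnion_add hWconvex]
  have hsub : convexCombinations S + W ⊆ convexHull ℝ (⋃ i, {x | f i x - b i ∈ K i}) :=
    hhull ▸ add_subset_add_right (convexCombinations_subset_convexHull S)
  have hlow := convexHull_iUnion_subset_hullReformulation (f := f) (b := b) hKconvex hK0
  have hup : hullReformulation f b K ⊆ convexCombinations S + W :=
    hullReformulation_subset_convexCombinations_add hKconvex hKcone hP hSbounded hSne
      hWclosed hWconvex
  have hclosed : IsClosed (convexHull ℝ (⋃ i, {x | f i x - b i ∈ K i})) := by
    rw [← hsub.antisymm (hlow.trans hup)]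
    exact hWclosed.add_left_of_isCompact (isCompact_convexCombinations fun i =>
      Metric.isCompact_of_isClosed_isBounded (hSclosed i) (hSbounded i))
  have heq := hlow.antisymm (hup.trans hsub)
  exact ⟨heq, heq ▸ hclosed.closure_eq.symm⟩

/-- If the conic disjuncts `P i = {x | A i x - b i ∈ K i}` (with
`K i` proper cones) all decompose as `P i = S i + W` with `S i` compact-like
(closed, bounded, convex, nonempty) and `W` a common closed convex set, then the
convex hull of the union, the projection of the hull-reformulation set, and the
closed convex hull of the union all coincide. -/
theorem conv_union_eq_proj_hull_eq_closure
    {n : ℕ} {I : Type*} [Fintype I] [Nonempty I]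
    (m : I → ℕ)
    (A : ∀ i : I, Matrix (Fin (m i)) (Fin n) ℝ)
    (b : ∀ i : I, Fin (m i) → ℝ)
    (K : ∀ i : I, Set (Fin (m i) → ℝ))
    (hKclosed : ∀ i, IsClosed (K i))
    (hKconvex : ∀ i, Convex ℝ (K i))
    (hKcone : ∀ i, ∀ z ∈ K i, ∀ c : ℝ, 0 ≤ c → c • z ∈ K i)
    (hKpointed : ∀ i, K i ∩ (-(K i)) = {0})
    (hKint : ∀ i, (interior (K i)).Nonempty)
    (W : Set (Fin n → ℝ)) (hWconvex : Convex ℝ W) (hWclosed : IsClosed W)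
    (S : I → Set (Fin n → ℝ))
    (hSclosed : ∀ i, IsClosed (S i))
    (hSbounded : ∀ i, Bornology.IsBounded (S i))
    (hSconvex : ∀ i, Convex ℝ (S i))
    (hSne : ∀ i, (S i).Nonempty)
    (hdecomp : ∀ i, {x : Fin n → ℝ | A i *ᵥ x - b i ∈ K i} = S i + W) :
    convexHull ℝ (⋃ i : I, {x : Fin n → ℝ | A i *ᵥ x - b i ∈ K i}) =
      {x : Fin n → ℝ | ∃ (v : I → (Fin n → ℝ)) (lam : I → ℝ),
        x = ∑ i : I, v i ∧
        ∑ i : I, lam i = 1 ∧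
        (∀ i : I, 0 ≤ lam i) ∧
        (∀ i : I, A i *ᵥ v i - lam i • b i ∈ K i)} ∧
    {x : Fin n → ℝ | ∃ (v : I → (Fin n → ℝ)) (lam : I → ℝ),
        x = ∑ i : I, v i ∧
        ∑ i : I, lam i = 1 ∧
        (∀ i : I, 0 ≤ lam i) ∧
        (∀ i : I, A i *ᵥ v i - lam i • b i ∈ K i)} =
      closure (convexHull ℝ (⋃ i : I, {x : Fin n → ℝ | A i *ᵥ x - b i ∈ K i})) :=
  conv_union_eq_proj_hull_eq_closure_general m A b K hKconvex hKcone hKint W hWconvex hWclosed S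
    hSclosed hSbounded hSne hdecomp
end

section
/- Let n ∈ ℕ and let I be a finite nonempty index set. For each i ∈ I let A_i be a real m_i × n matrix, b_i ∈ ℝ^{m_i}, and K_i ⊆ ℝ^{m_i} a closed convex cone, and set P_i = {x ∈ ℝ^n : A_i x − b_i ∈ K_i}. Suppose every P_i is nonempty and bounded. Let P_{0,1} = {(x, (v_i)_{i∈I}, (λ_i)_{i∈I}) : x = Σ_{i∈I} v_i, Σ_{i∈I} λ_i = 1, λ_i ∈ {0,1} for all i ∈ I, and A_i v_i − λ_i b_i ∈ K_i for all i ∈ I}. Then the projection of P_{0,1} onto the x coordinates equals the union of the disjuncts: proj_x(P_{0,1}) = ⋃_{i∈I} P_i. (This is the validity of the hull reformulation of a conic disjunction as a mixed-integer conic program.) -/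
open Matrix

private lemma cone_add {m : ℕ} {K : Set (Fin m → ℝ)} (hconv : Convex ℝ K)
    (hcone : ∀ z ∈ K, ∀ c : ℝ, 0 ≤ c → c • z ∈ K)
    {a b : Fin m → ℝ} (ha : a ∈ K) (hb : b ∈ K) : a + b ∈ K := by
  have h1 : (1/2 : ℝ) • a + (1/2 : ℝ) • b ∈ K :=
    hconv ha hb (by norm_num) (by norm_num) (by norm_num)
  have h2 := hcone _ h1 2 (by norm_num)
  have : (2:ℝ) • ((1/2 : ℝ) • a + (1/2 : ℝ) • b) = a + b := by
    rw [smul_add, smul_smul, smul_smul]; norm_num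
  rwa [this] at h2

/-- Validity of the hull reformulation of a conic disjunction as
a mixed-integer conic program: with binary multipliers, the projection onto `x`
of the extended set equals the union of the nonempty bounded conic disjuncts. -/
theorem proj_binary_hull_eq_union
    {n : ℕ} {I : Type*} [Fintype I] [Nonempty I]
    (m : I → ℕ)
    (A : ∀ i : I, Matrix (Fin (m i)) (Fin n) ℝ)
    (b : ∀ i : I, Fin (m i) → ℝ)
    (K : ∀ i : I, Set (Fin (m i) → ℝ))
    (hKclosed : ∀ i, IsClosed (K i))
    (hKconvex : ∀ i, Convex ℝ (K i))
    (hKcone : ∀ i, ∀ z ∈ K i, ∀ c : ℝ, 0 ≤ c → c • z ∈ K i)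
    (hPne : ∀ i, ({x : Fin n → ℝ | A i *ᵥ x - b i ∈ K i}).Nonempty)
    (hPbdd : ∀ i, Bornology.IsBounded {x : Fin n → ℝ | A i *ᵥ x - b i ∈ K i}) :
    {x : Fin n → ℝ | ∃ (v : I → (Fin n → ℝ)) (lam : I → ℝ),
        x = ∑ i : I, v i ∧
        ∑ i : I, lam i = 1 ∧
        (∀ i : I, lam i = 0 ∨ lam i = 1) ∧
        (∀ i : I, A i *ᵥ v i - lam i • b i ∈ K i)} =
      ⋃ i : I, {x : Fin n → ℝ | A i *ᵥ x - b i ∈ K i} := by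
  classical
  have hzero : ∀ i, (0 : Fin (m i) → ℝ) ∈ K i := by
    intro i
    obtain ⟨x0, hx0⟩ := hPne i
    simpa using hKcone i _ hx0 0 le_rfl
  ext x
  simp only [Set.mem_setOf_eq, Set.mem_iUnion]
  constructor
  · rintro ⟨v, lam, hx, hsum, hbin, hK⟩
    have hnonneg : ∀ i, 0 ≤ lam i := fun i => by rcases hbin i with h | h <;> simp [h]
    obtain ⟨i₀, hi₀⟩ : ∃ i, lam i = 1 := by
      by_contra h
      push_neg at h
      have h0 : ∀ i, lam i = 0 := fun i => (hbin i).resolve_right (h i)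
      simp [h0] at hsum
    have herase : lam i₀ + ∑ i ∈ Finset.univ.erase i₀, lam i = 1 := by
      rw [Finset.add_sum_erase Finset.univ lam (Finset.mem_univ i₀)]; exact hsum
    have hsum0 : ∑ i ∈ Finset.univ.erase i₀, lam i = 0 := by linarith
    have hrest : ∀ j, j ≠ i₀ → lam j = 0 := by
      intro j hj
      exact (Finset.sum_eq_zero_iff_of_nonneg (fun i _ => hnonneg i)).1 hsum0 j
        (Finset.mem_erase.2 ⟨hj, Finset.mem_univ j⟩)
    have hv0 : ∀ j, j ≠ i₀ → v j = 0 := by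
      intro j hj
      by_contra hvne
      have hAw : A j *ᵥ v j ∈ K j := by
        have := hK j
        rw [hrest j hj] at this
        simpa using this
      obtain ⟨x0, hx0⟩ := hPne j
      obtain ⟨r, hr⟩ := (hPbdd j).subset_closedBall 0
      have hnv : (0:ℝ) < ‖v j‖ := norm_pos_iff.2 hvne
      set t : ℝ := (|r| + ‖x0‖ + 1) / ‖v j‖ with ht
      have htpos : 0 ≤ t := by positivity
      have hmem : x0 + t • v j ∈ {x : Fin n → ℝ | A j *ᵥ x - b j ∈ K j} := by
        have : A j *ᵥ (x0 + t • v j) - b j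
            = (A j *ᵥ x0 - b j) + t • (A j *ᵥ v j) := by
          rw [mulVec_add, mulVec_smul, add_sub_right_comm]
        rw [Set.mem_setOf_eq, this]
        exact cone_add (hKconvex j) (hKcone j) hx0 (hKcone j _ hAw t htpos)
      have hball := hr hmem
      rw [Metric.mem_closedBall, dist_zero_right] at hball
      have h1 : ‖t • v j‖ ≤ ‖x0 + t • v j‖ + ‖x0‖ := by
        have h := norm_sub_le (x0 + t • v j) x0
        rwa [add_sub_cancel_left] at h
      have h2 : ‖t • v j‖ = |r| + ‖x0‖ + 1 := by
        rw [norm_smul, Real.norm_eq_abs, abs_of_nonneg htpos, ht,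
          div_mul_cancel₀ _ (ne_of_gt hnv)]
      rw [h2] at h1
      linarith [le_abs_self r]
    have hxv : x = v i₀ := by
      rw [hx, Finset.sum_eq_single i₀ (fun j _ hj => hv0 j hj) (fun h => absurd (Finset.mem_univ i₀) h)]
    refine ⟨i₀, ?_⟩
    show A i₀ *ᵥ x - b i₀ ∈ K i₀
    rw [hxv]
    have := hK i₀
    rw [hi₀] at this
    simpa using this
  · rintro ⟨i, hi⟩
    refine ⟨fun j => if j = i then x else 0, fun j => if j = i then 1 else 0, ?_, ?_, ?_, ?_⟩
    · simp [Finset.sum_ite_eq']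
    · simp [Finset.sum_ite_eq']
    · intro j; by_cases h : j = i <;> simp [h]
    · intro j
      by_cases h : j = i
      · subst h; simpa using hi
      · simp only [if_neg h]
        simpa using hzero j
end

section
/- Let n ∈ ℕ, let I be a finite nonempty index set, and for each i ∈ I let C_i ⊆ ℝ^n be a nonempty compact convex set. Define H₀ = {(x, (v_i)_{i∈I}, (λ_i)_{i∈I}) ∈ ℝ^n × (ℝ^n)^I × ℝ^I : x = Σ_{i∈I} v_i, Σ_{i∈I} λ_i = 1, λ_i ≥ 0 for all i ∈ I, and for each i ∈ I, either λ_i > 0 and v_i/λ_i ∈ C_i, or λ_i = 0 and v_i = 0}. Then the projection of H₀ onto the x coordinates equals the closure of the convex hull of the union: proj_x(H₀) = cl conv(⋃_{i∈I} C_i). -/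
/-!
Writing `v i = lam i • p i` with `p i ∈ C i` identifies the set with the image of
`stdSimplex ℝ I × ∏ i, C i` under `(lam, p) ↦ ∑ i, lam i • p i`: a compact set lying in the convex
hull of `⋃ i, C i`. Conversely, grouping a convex combination of points of the union according to
the `C i` they lie in, and using the convexity of each `C i`, puts the hull inside the set. Hence
the set is the convex hull, which is closed.
-/

open Set Finset

section

variable {E ι : Type*} [AddCommGroup E] [Module ℝ E]

lemma perspective_iff_exists_eq_smul {C : Set E} (hC : C.Nonempty) {t : ℝ} (ht : 0 ≤ t) {v : E} :
    (0 < t ∧ t⁻¹ • v ∈ C) ∨ (t = 0 ∧ v = 0) ↔ ∃ p ∈ C, v = t • p := by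
  constructor
  · rintro (⟨htpos, hv⟩ | ⟨rfl, rfl⟩)
    · exact ⟨t⁻¹ • v, hv, (smul_inv_smul₀ htpos.ne' v).symm⟩
    · exact ⟨hC.some, hC.some_mem, (zero_smul ℝ _).symm⟩
  · rintro ⟨p, hp, rfl⟩
    rcases ht.eq_or_lt with rfl | htpos
    · exact Or.inr ⟨rfl, zero_smul ℝ p⟩
    · exact Or.inl ⟨htpos, by rwa [inv_smul_smul₀ htpos.ne']⟩

variable [Fintype ι]

def weightedSum (q : (ι → ℝ) × (ι → E)) : E := ∑ i, q.1 i • q.2 i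

lemma setOf_perspective_eq_image_weightedSum {C : ι → Set E} (hC : ∀ i, (C i).Nonempty) :
    {x : E | ∃ (v : ι → E) (lam : ι → ℝ), x = ∑ i, v i ∧ ∑ i, lam i = 1 ∧ (∀ i, 0 ≤ lam i) ∧
        ∀ i, (0 < lam i ∧ (lam i)⁻¹ • v i ∈ C i) ∨ (lam i = 0 ∧ v i = 0)} =
      weightedSum '' (stdSimplex ℝ ι ×ˢ Set.univ.pi C) := by
  ext x
  constructor
  · rintro ⟨v, lam, rfl, hsum, hnonneg, hv⟩
    choose p hpC hvp using fun i ↦ (perspective_iff_exists_eq_smul (hC i) (hnonneg i)).1 (hv i)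
    exact ⟨(lam, p), ⟨⟨hnonneg, hsum⟩, fun i _ ↦ hpC i⟩, by simp only [weightedSum, hvp]⟩
  · rintro ⟨⟨lam, p⟩, ⟨⟨hnonneg, hsum⟩, hp⟩, rfl⟩
    exact ⟨fun i ↦ lam i • p i, lam, rfl, hsum, hnonneg,
      fun i ↦ (perspective_iff_exists_eq_smul (hC i) (hnonneg i)).2 ⟨p i, hp i trivial, rfl⟩⟩

lemma image_weightedSum_subset_convexHull (C : ι → Set E) :
    weightedSum '' (stdSimplex ℝ ι ×ˢ Set.univ.pi C) ⊆ convexHull ℝ (⋃ i, C i) := by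
  rintro _ ⟨⟨lam, p⟩, ⟨⟨hnonneg, hsum⟩, hp⟩, rfl⟩
  exact (convex_convexHull ℝ _).sum_mem (fun i _ ↦ hnonneg i) hsum
    fun i _ ↦ subset_convexHull ℝ _ (mem_iUnion_of_mem i (hp i trivial))

lemma isCompact_image_weightedSum [TopologicalSpace E] [ContinuousAdd E] [ContinuousSMul ℝ E]
    {C : ι → Set E} (hC : ∀ i, IsCompact (C i)) :
    IsCompact (weightedSum '' (stdSimplex ℝ ι ×ˢ Set.univ.pi C)) :=
  ((isCompact_stdSimplex ℝ ι).prod (isCompact_univ_pi hC)).image <|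
    continuous_finsetSum _ fun i _ ↦
      ((continuous_apply i).comp continuous_fst).smul ((continuous_apply i).comp continuous_snd)

lemma convexHull_iUnion_subset_setOf_perspective {C : ι → Set E} (hC : ∀ i, Convex ℝ (C i)) :
    convexHull ℝ (⋃ i, C i) ⊆
      {x : E | ∃ (v : ι → E) (lam : ι → ℝ), x = ∑ i, v i ∧ ∑ i, lam i = 1 ∧ (∀ i, 0 ≤ lam i) ∧
        ∀ i, (0 < lam i ∧ (lam i)⁻¹ • v i ∈ C i) ∨ (lam i = 0 ∧ v i = 0)} := by
  classical
  intro x hx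
  obtain ⟨κ, _, w, z, hw, hw1, hz, rfl⟩ := mem_convexHull_iff_exists_fintype.1 hx
  choose f hf using fun j ↦ mem_iUnion.1 (hz j)
  set fiber : ι → Finset κ := fun i ↦ {j | f j = i}
  refine ⟨fun i ↦ ∑ j ∈ fiber i, w j • z j, fun i ↦ ∑ j ∈ fiber i, w j,
    (sum_fiberwise univ f _).symm, (sum_fiberwise univ f w).trans hw1,
    fun i ↦ sum_nonneg fun j _ ↦ hw j, fun i ↦ ?_⟩
  rcases (sum_nonneg fun j _ ↦ hw j : 0 ≤ ∑ j ∈ fiber i, w j).eq_or_lt with hzero | hpos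
  · have hw0 := (sum_eq_zero_iff_of_nonneg fun j _ ↦ hw j).1 hzero.symm
    exact Or.inr ⟨hzero.symm, sum_eq_zero fun j hj ↦ by rw [hw0 j hj, zero_smul]⟩
  · refine Or.inl ⟨hpos, ?_⟩
    have hmem := (hC i).centerMass_mem (fun j _ ↦ hw j) hpos fun j hj ↦ (mem_filter.1 hj).2 ▸ hf j
    simpa only [centerMass] using hmem

end

theorem proj_perspective_hull_eq_closure_convexHull_union_general
    {n : ℕ} {I : Type*} [Fintype I]
    (C : I → Set (Fin n → ℝ))
    (hCne : ∀ i, (C i).Nonempty)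
    (hCcompact : ∀ i, IsCompact (C i))
    (hCconvex : ∀ i, Convex ℝ (C i)) :
    {x : Fin n → ℝ | ∃ (v : I → (Fin n → ℝ)) (lam : I → ℝ),
        x = ∑ i : I, v i ∧
        ∑ i : I, lam i = 1 ∧
        (∀ i : I, 0 ≤ lam i) ∧
        (∀ i : I, (0 < lam i ∧ (lam i)⁻¹ • v i ∈ C i) ∨ (lam i = 0 ∧ v i = 0))} =
      closure (convexHull ℝ (⋃ i : I, C i)) := by
  have hS := setOf_perspective_eq_image_weightedSum hCne
  refine Subset.antisymm ?_
    (closure_minimal (convexHull_iUnion_subset_setOf_perspective hCconvex) ?_)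
  · rw [hS]
    exact (image_weightedSum_subset_convexHull C).trans subset_closure
  · rw [hS]
    exact (isCompact_image_weightedSum hCcompact).isClosed

/-- For nonempty compact convex sets `C i`, the projection onto
`x` of the extended set `H₀` (with the exact perspective conditions) equals the
closure of the convex hull of the union of the `C i`. -/
theorem proj_perspective_hull_eq_closure_convexHull_union
    {n : ℕ} {I : Type*} [Fintype I] [Nonempty I]
    (C : I → Set (Fin n → ℝ))
    (hCne : ∀ i, (C i).Nonempty)
    (hCcompact : ∀ i, IsCompact (C i))
    (hCconvex : ∀ i, Convex ℝ (C i)) :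
    {x : Fin n → ℝ | ∃ (v : I → (Fin n → ℝ)) (lam : I → ℝ),
        x = ∑ i : I, v i ∧
        ∑ i : I, lam i = 1 ∧
        (∀ i : I, 0 ≤ lam i) ∧
        (∀ i : I, (0 < lam i ∧ (lam i)⁻¹ • v i ∈ C i) ∨ (lam i = 0 ∧ v i = 0))} =
      closure (convexHull ℝ (⋃ i : I, C i)) :=
  proj_perspective_hull_eq_closure_convexHull_union_general C hCne hCcompact hCconvex
end

section
/- Let ε ∈ (0,1), let n ∈ ℕ, let I be a finite nonempty index set, and for each i ∈ I let h_i : ℝ^n → ℝ^{J_i} be a function with convex components such that {x ∈ ℝ^n : h_i(x) ≤ h_i(0) componentwise} = {0}. Define C_i = {x ∈ ℝ^n : h_i(x) ≤ 0 componentwise} and H^ε_{0,1} = {(x, (v_i)_{i∈I}, (λ_i)_{i∈I}) : x = Σ_{i∈I} v_i, Σ_{i∈I} λ_i = 1, λ_i ∈ {0,1} for all i ∈ I, and for each i ∈ I, ((1−ε)λ_i + ε)·h_i( v_i / ((1−ε)λ_i + ε) ) − ε·h_i(0)·(1−λ_i) ≤ 0 componentwise}. Then proj_x(H^ε_{0,1})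 = ⋃_{i∈I} C_i, i.e. the ε-approximation of the hull reformulation with binary multipliers exactly represents the disjunction for every ε ∈ (0,1). -/
/-- For every `ε ∈ (0,1)`, the ε-approximation of the hull
reformulation with binary multipliers exactly represents the disjunction
`⋃ i, {x | h i x ≤ 0}`, provided each component of `h i` is convex and
`{x | h i x ≤ h i 0} = {0}`. -/
theorem proj_eps_approx_binary_hull_eq_union
    {n : ℕ} {I : Type*} [Fintype I] [Nonempty I]
    (J : I → ℕ)
    (h : ∀ i : I, (Fin n → ℝ) → (Fin (J i) → ℝ))
    (hconv : ∀ i, ∀ j : Fin (J i), ConvexOn ℝ Set.univ (fun x => h i x j))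
    (hzero : ∀ i, {x : Fin n → ℝ | ∀ j : Fin (J i), h i x j ≤ h i 0 j} = {0})
    (ε : ℝ) (hε : ε ∈ Set.Ioo (0 : ℝ) 1) :
    {x : Fin n → ℝ | ∃ (v : I → (Fin n → ℝ)) (lam : I → ℝ),
        x = ∑ i : I, v i ∧
        ∑ i : I, lam i = 1 ∧
        (∀ i : I, lam i = 0 ∨ lam i = 1) ∧
        (∀ i : I, ∀ j : Fin (J i),
          ((1 - ε) * lam i + ε) * h i (((1 - ε) * lam i + ε)⁻¹ • v i) j
            - ε * h i 0 j * (1 - lam i) ≤ 0)} =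
      ⋃ i : I, {x : Fin n → ℝ | ∀ j : Fin (J i), h i x j ≤ 0} := by
  classical
  obtain ⟨hε0, hε1⟩ := hε
  ext x
  simp only [Set.mem_setOf_eq, Set.mem_iUnion]
  constructor
  · rintro ⟨v, lam, hx, hsum, hbin, hineq⟩
    have hex : ∃ i₀, lam i₀ = 1 := by
      by_contra hc
      push_neg at hc
      have hall : ∀ i, lam i = 0 := fun i => (hbin i).resolve_right (hc i)
      simp [hall] at hsum
    obtain ⟨i₀, hi₀⟩ := hex
    have hv0 : ∀ i, lam i = 0 → v i = 0 := by
      intro i hi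
      have key : ∀ j, h i (ε⁻¹ • v i) j ≤ h i 0 j := by
        intro j
        have hI := hineq i j
        rw [hi] at hI
        simp only [mul_zero, zero_add, sub_zero, sub_self, mul_one] at hI
        nlinarith
      have hm : ε⁻¹ • v i ∈ {x : Fin n → ℝ | ∀ j, h i x j ≤ h i 0 j} := key
      rw [hzero i] at hm
      have hm' : ε⁻¹ • v i = 0 := hm
      have : ε⁻¹ ≠ 0 := inv_ne_zero (ne_of_gt hε0)
      rcases smul_eq_zero.mp hm' with hc | hc
      · exact absurd hc this
      · exact hc
    have hlam0 : ∀ i, i ≠ i₀ → lam i = 0 := by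
      intro i hi
      have hsum' : ∑ k ∈ Finset.univ.erase i₀, lam k = 0 := by
        have := Finset.add_sum_erase Finset.univ lam (Finset.mem_univ i₀)
        rw [hsum, hi₀] at this
        linarith
      have hnonneg : ∀ k ∈ Finset.univ.erase i₀, 0 ≤ lam k := by
        intro k _
        rcases hbin k with hk | hk <;> rw [hk] <;> norm_num
      exact (Finset.sum_eq_zero_iff_of_nonneg hnonneg).mp hsum' i
        (Finset.mem_erase.mpr ⟨hi, Finset.mem_univ i⟩)
    have hxv : x = v i₀ := by
      rw [hx]
      exact Finset.sum_eq_single i₀ (fun i _ hi => hv0 i (hlam0 i hi))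
        (fun hmem => absurd (Finset.mem_univ i₀) hmem)
    refine ⟨i₀, fun j => ?_⟩
    have hI := hineq i₀ j
    rw [hi₀] at hI
    simp only [mul_one, sub_add_cancel, inv_one, one_smul, one_mul, sub_self,
      mul_zero, sub_zero] at hI
    rwa [hxv]
  · rintro ⟨i₀, hx⟩
    refine ⟨fun i => if i = i₀ then x else 0, fun i => if i = i₀ then 1 else 0,
      ?_, ?_, ?_, ?_⟩
    · simp
    · simp
    · intro i; by_cases hi : i = i₀ <;> simp [hi]
    · intro i j
      by_cases hi : i = i₀
      · subst hi
        simp only [if_pos rfl, if_true, mul_one, sub_add_cancel, inv_one, one_smul,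
          one_mul, sub_self, mul_zero, sub_zero]
        exact hx j
      · simp only [if_neg hi, mul_zero, zero_add, smul_zero, sub_zero, mul_one]
        have : ε * h i 0 j - ε * h i 0 j = 0 := sub_self _
        linarith [this]
end

section
/- Let h : ℝ^n → ℝ be a convex function and let ε ∈ (0,1). Then the function g(x, λ) = ((1−ε)λ + ε)·h( x / ((1−ε)λ + ε) ) − ε·h(0)·(1−λ) is convex on ℝ^n × [0,1]. Moreover g(x, 1) = h(x) for all x ∈ ℝ^n. -/
/-!
The perspective `(x, t) ↦ t f(x / t)` of a convex function `f` is convex on `t > 0`: for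
`T = a t₁ + b t₂`, the point `(a x₁ + b x₂) / T` is the convex combination of `x₁ / t₁` and
`x₂ / t₂` with weights `a t₁ / T` and `b t₂ / T`. The function `g` is the perspective of `h`
precomposed with the affine map `(x, λ) ↦ (x, (1 - ε) λ + ε)`, which sends `ℝⁿ × [0, 1]` into
`t ≥ ε > 0`, minus a function affine in `λ`.
-/

section Perspective

variable {𝕜 E : Type*} [Field 𝕜] [AddCommGroup E] [Module 𝕜 E]

lemma inv_smul_add_eq_combination {a b t₁ t₂ : 𝕜} (ht₁ : t₁ ≠ 0) (ht₂ : t₂ ≠ 0)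
    (hT : a * t₁ + b * t₂ ≠ 0) (x₁ x₂ : E) :
    (a * t₁ + b * t₂)⁻¹ • (a • x₁ + b • x₂) =
      (a * t₁ / (a * t₁ + b * t₂)) • (t₁⁻¹ • x₁) + (b * t₂ / (a * t₁ + b * t₂)) • (t₂⁻¹ • x₂) := by
  simp only [smul_add, smul_smul]
  congr 2 <;> field_simp

variable [LinearOrder 𝕜] [IsStrictOrderedRing 𝕜]

def perspective (f : E → 𝕜) (p : E × 𝕜) : 𝕜 := p.2 * f (p.2⁻¹ • p.1)

def perspectiveDomain (s : Set E) : Set (E × 𝕜) := {p | 0 < p.2 ∧ p.2⁻¹ • p.1 ∈ s}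

variable {s : Set E}

lemma Convex.perspectiveDomain (hs : Convex 𝕜 s) :
    Convex 𝕜 (perspectiveDomain s : Set (E × 𝕜)) := by
  rintro ⟨x₁, t₁⟩ ⟨ht₁, hy₁⟩ ⟨x₂, t₂⟩ ⟨ht₂, hy₂⟩ a b ha hb hab
  have hT : 0 < a * t₁ + b * t₂ := convex_Ioi 0 ht₁ ht₂ ha hb hab
  refine ⟨hT, ?_⟩
  simp only [Prod.smul_mk, Prod.mk_add_mk, smul_eq_mul]
  rw [inv_smul_add_eq_combination ht₁.ne' ht₂.ne' hT.ne']
  exact hs hy₁ hy₂ (by positivity) (by positivity) (by rw [← add_div, div_self hT.ne'])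

theorem ConvexOn.perspective {f : E → 𝕜} (hf : ConvexOn 𝕜 s f) :
    ConvexOn 𝕜 (perspectiveDomain s) (perspective f) := by
  refine ⟨hf.1.perspectiveDomain, ?_⟩
  rintro ⟨x₁, t₁⟩ ⟨ht₁, hy₁⟩ ⟨x₂, t₂⟩ ⟨ht₂, hy₂⟩ a b ha hb hab
  set T := a * t₁ + b * t₂
  have hT : 0 < T := convex_Ioi 0 ht₁ ht₂ ha hb hab
  simp only [_root_.perspective, Prod.smul_mk, Prod.mk_add_mk, smul_eq_mul]
  rw [inv_smul_add_eq_combination ht₁.ne' ht₂.ne' hT.ne']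
  calc T * f ((a * t₁ / T) • (t₁⁻¹ • x₁) + (b * t₂ / T) • (t₂⁻¹ • x₂))
      ≤ T * ((a * t₁ / T) * f (t₁⁻¹ • x₁) + (b * t₂ / T) * f (t₂⁻¹ • x₂)) := by
        gcongr
        exact hf.2 hy₁ hy₂ (by positivity) (by positivity) (by rw [← add_div, div_self hT.ne'])
    _ = a * (t₁ * f (t₁⁻¹ • x₁)) + b * (t₂ * f (t₂⁻¹ • x₂)) := by
        field_simp

end Perspective

/-- For a convex function `h : ℝⁿ → ℝ` and `ε ∈ (0,1)`, the
ε-approximation of the closure of the perspective of `h`,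
`g (x, λ) = ((1-ε)λ + ε) · h (x / ((1-ε)λ + ε)) - ε · h 0 · (1 - λ)`,
is convex on `ℝⁿ × [0,1]` and satisfies `g (x, 1) = h x`. -/
theorem eps_approx_perspective_convexOn
    {n : ℕ} (h : (Fin n → ℝ) → ℝ)
    (hconv : ConvexOn ℝ Set.univ h)
    (ε : ℝ) (hε : ε ∈ Set.Ioo (0 : ℝ) 1) :
    ConvexOn ℝ (Set.univ ×ˢ Set.Icc (0 : ℝ) 1)
      (fun p : (Fin n → ℝ) × ℝ =>
        ((1 - ε) * p.2 + ε) * h (((1 - ε) * p.2 + ε)⁻¹ • p.1)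
          - ε * h 0 * (1 - p.2)) ∧
    ∀ x : Fin n → ℝ,
      ((1 - ε) * (1 : ℝ) + ε) * h (((1 - ε) * (1 : ℝ) + ε)⁻¹ • x)
          - ε * h 0 * (1 - (1 : ℝ)) = h x := by
  refine ⟨?_, fun x => by norm_num⟩
  have hD : Convex ℝ (Set.univ ×ˢ Set.Icc (0 : ℝ) 1 : Set ((Fin n → ℝ) × ℝ)) :=
    convex_univ.prod (convex_Icc 0 1)
  set A := (AffineMap.id ℝ (Fin n → ℝ)).prodMap (AffineMap.lineMap ε (1 : ℝ))
  have hA : Set.univ ×ˢ Set.Icc 0 1 ⊆ A ⁻¹' perspectiveDomain Set.univ := fun p ⟨_, hp⟩ =>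
    ⟨(convex_Ioi (0 : ℝ)).lineMap_mem (x := ε) (y := 1) hε.1 (Set.mem_Ioi.2 one_pos) hp, trivial⟩
  have hL : ConcaveOn ℝ (Set.univ ×ˢ Set.Icc 0 1)
      fun p : (Fin n → ℝ) × ℝ => ε * h 0 * (1 - p.2) :=
    ⟨hD, fun p _ q _ a b _ _ hab => le_of_eq <| by
      simp only [Prod.snd_add, Prod.smul_snd, smul_eq_mul]
      linear_combination ε * h 0 * hab⟩
  refine (((hconv.perspective.comp_affineMap A).subset hA hD).sub hL).congr fun p _ => ?_
  simp only [Pi.sub_apply, Function.comp_apply, perspective, A, AffineMap.prodMap_apply,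
    AffineMap.id_apply, AffineMap.lineMap_apply_ring']
  ring_nf
end

section
/- In ℝ³, the closure of the set A = {(z₁, z₂, z₃) : z₂ > 0 and z₁ ≥ z₂·exp(z₃/z₂)} equals A ∪ {(z₁, 0, z₃) : z₁ ≥ 0 and z₃ ≤ 0}; that is, cl(A) = {(z₁, z₂, z₃) : z₂ > 0, z₁ ≥ z₂·exp(z₃/z₂)} ∪ ( [0,∞) × {0} × (−∞, 0] ). -/
open Filter Topology Real

private lemma exp_quad_lower (t s : ℝ) (ht : 0 < t) (hs : 0 ≤ s) :
    s ^ 2 / (4 * t) ≤ t * Real.exp (s / t) := by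
  have hu : 0 ≤ s / (2 * t) := by positivity
  have h1 : s / (2 * t) ≤ Real.exp (s / (2 * t)) := by
    have := Real.add_one_le_exp (s / (2 * t)); linarith
  have h2 : (s / (2 * t)) ^ 2 ≤ Real.exp (s / t) := by
    have he : Real.exp (s / t) = Real.exp (s / (2 * t)) ^ 2 := by
      rw [← Real.exp_nat_mul]
      congr 1
      field_simp
      ring
    rw [he]
    exact pow_le_pow_left₀ hu h1 2
  have key : t * (s / (2 * t)) ^ 2 ≤ t * Real.exp (s / t) :=
    mul_le_mul_of_nonneg_left h2 ht.le
  calc s ^ 2 / (4 * t) = t * (s / (2 * t)) ^ 2 := by field_simp; ring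
    _ ≤ t * Real.exp (s / t) := key

private lemma Kexp_isClosed :
    IsClosed ({z : ℝ × ℝ × ℝ | 0 < z.2.1 ∧ z.2.1 * Real.exp (z.2.2 / z.2.1) ≤ z.1} ∪
        {z : ℝ × ℝ × ℝ | 0 ≤ z.1 ∧ z.2.1 = 0 ∧ z.2.2 ≤ 0}) := by
  apply IsSeqClosed.isClosed
  intro x p hx hp
  have h1 : Tendsto (fun n => (x n).1) atTop (𝓝 p.1) :=
    ((continuous_fst.tendsto p).comp hp)
  have h2 : Tendsto (fun n => (x n).2.1) atTop (𝓝 p.2.1) :=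
    (((continuous_fst.comp continuous_snd).tendsto p).comp hp)
  have h3 : Tendsto (fun n => (x n).2.2) atTop (𝓝 p.2.2) :=
    (((continuous_snd.comp continuous_snd).tendsto p).comp hp)
  have hx1nn : ∀ n, 0 ≤ (x n).1 := by
    intro n
    rcases hx n with ⟨hpos, hle⟩ | ⟨h, _, _⟩
    · have : 0 < (x n).2.1 * Real.exp ((x n).2.2 / (x n).2.1) := by positivity
      linarith
    · exact h
  have hx2nn : ∀ n, 0 ≤ (x n).2.1 := by
    intro n
    rcases hx n with ⟨hpos, _⟩ | ⟨_, h, _⟩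
    · exact hpos.le
    · exact h.ge
  have hp1nn : 0 ≤ p.1 := ge_of_tendsto' h1 hx1nn
  have hp2nn : 0 ≤ p.2.1 := ge_of_tendsto' h2 hx2nn
  rcases lt_or_eq_of_le hp2nn with hpos | hzero
  · -- p.2.1 > 0 : show p ∈ A
    left
    refine ⟨hpos, ?_⟩
    have hev : ∀ᶠ n in atTop, 0 < (x n).2.1 := h2.eventually (eventually_gt_nhds hpos)
    have hevA : ∀ᶠ n in atTop,
        (x n).2.1 * Real.exp ((x n).2.2 / (x n).2.1) ≤ (x n).1 := by
      filter_upwards [hev] with n hn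
      rcases hx n with ⟨_, hle⟩ | ⟨_, hz, _⟩
      · exact hle
      · exact absurd hz hn.ne'
    have htend : Tendsto (fun n => (x n).2.1 * Real.exp ((x n).2.2 / (x n).2.1))
        atTop (𝓝 (p.2.1 * Real.exp (p.2.2 / p.2.1))) :=
      h2.mul ((Real.continuous_exp.tendsto _).comp (h3.div h2 hpos.ne'))
    exact le_of_tendsto_of_tendsto' htend h1 fun n => by
      by_cases hn : (x n).2.1 * Real.exp ((x n).2.2 / (x n).2.1) ≤ (x n).1
      · exact hn
      · exact absurd hn (by
          rcases hx n with ⟨_, hle⟩ | ⟨hnn, hz, _⟩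
          · exact fun h => h hle
          · intro h
            apply h
            rw [hz]
            simpa using hnn)
  · -- p.2.1 = 0
    right
    refine ⟨hp1nn, hzero.symm, ?_⟩
    by_contra hc
    push_neg at hc
    set c := p.2.2 with hcdef
    set M := p.1 + 1 with hM
    have hMpos : 0 < M := by positivity
    have hδpos : 0 < c ^ 2 / (16 * M) := by positivity
    have hev2 : ∀ᶠ n in atTop, (x n).2.1 < c ^ 2 / (16 * M) := by
      have h2' := h2
      rw [← hzero] at h2'
      exact h2'.eventually (eventually_lt_nhds hδpos)
    have hev3 : ∀ᶠ n in atTop, c / 2 < (x n).2.2 :=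
      h3.eventually (eventually_gt_nhds (by linarith))
    have hev1 : ∀ᶠ n in atTop, (x n).1 < M :=
      h1.eventually (eventually_lt_nhds (by rw [hM]; linarith))
    have : ∀ᶠ n : ℕ in atTop, False := by
      filter_upwards [hev1, hev2, hev3] with n hn1 hn2 hn3
      have hA : 0 < (x n).2.1 ∧ (x n).2.1 * Real.exp ((x n).2.2 / (x n).2.1) ≤ (x n).1 := by
        rcases hx n with h | ⟨_, _, h3'⟩
        · exact h
        · linarith
      obtain ⟨ht, hle⟩ := hA
      have hmono : Real.exp ((c / 2) / (x n).2.1) ≤ Real.exp ((x n).2.2 / (x n).2.1) :=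
        Real.exp_le_exp.mpr (by gcongr)
      have hq : (c / 2) ^ 2 / (4 * (x n).2.1) ≤ (x n).2.1 * Real.exp ((c / 2) / (x n).2.1) :=
        exp_quad_lower _ _ ht (by linarith)
      have hgt : M < (c / 2) ^ 2 / (4 * (x n).2.1) := by
        rw [lt_div_iff₀ (by linarith)]
        have : (x n).2.1 * (16 * M) < c ^ 2 := by
          rw [← lt_div_iff₀ (by positivity)]
          exact hn2
        nlinarith
      have := mul_le_mul_of_nonneg_left hmono ht.le
      linarith
    exact this.exists.elim fun _ h => h

/-- In `ℝ³`, the closure of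
`A = {(z₁, z₂, z₃) | z₂ > 0 ∧ z₁ ≥ z₂ · exp (z₃ / z₂)}` equals
`A ∪ ([0,∞) × {0} × (-∞,0])`; the resulting closed set is the exponential
cone `K_exp`. -/
theorem closure_expCone_open_part
    : closure {z : ℝ × ℝ × ℝ | 0 < z.2.1 ∧ z.2.1 * Real.exp (z.2.2 / z.2.1) ≤ z.1} =
      {z : ℝ × ℝ × ℝ | 0 < z.2.1 ∧ z.2.1 * Real.exp (z.2.2 / z.2.1) ≤ z.1} ∪
        {z : ℝ × ℝ × ℝ | 0 ≤ z.1 ∧ z.2.1 = 0 ∧ z.2.2 ≤ 0} := by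
  apply le_antisymm
  · exact closure_minimal Set.subset_union_left Kexp_isClosed
  · rintro p (hp | ⟨h1, h2, h3⟩)
    · exact subset_closure hp
    · have htend : Tendsto (fun n : ℕ => ((p.1 + 1 / (n + 1 : ℝ), (1 / (n + 1 : ℝ), p.2.2)) : ℝ × ℝ × ℝ))
          atTop (𝓝 p) := by
        have h0 : Tendsto (fun n : ℕ => 1 / (n + 1 : ℝ)) atTop (𝓝 0) :=
          tendsto_one_div_add_atTop_nhds_zero_nat
        have hA : Tendsto (fun n : ℕ => p.1 + 1 / (n + 1 : ℝ)) atTop (𝓝 p.1) := by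
          simpa using (tendsto_const_nhds (x := p.1)).add h0
        have hB : Tendsto (fun n : ℕ => 1 / (n + 1 : ℝ)) atTop (𝓝 p.2.1) := by
          rw [h2]; exact h0
        have hC : Tendsto (fun _ : ℕ => p.2.2) atTop (𝓝 p.2.2) := tendsto_const_nhds
        have := hA.prodMk (hB.prodMk hC)
        rw [show p = (p.1, p.2.1, p.2.2) from rfl, nhds_prod_eq, nhds_prod_eq]
        simpa using this
      refine mem_closure_of_tendsto htend (Filter.Eventually.of_forall fun n => ?_)
      have hn : (0 : ℝ) < 1 / (n + 1 : ℝ) := by positivity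
      refine ⟨hn, ?_⟩
      have hexp : Real.exp (p.2.2 / (1 / (n + 1 : ℝ))) ≤ 1 := by
        rw [Real.exp_le_one_iff]
        exact div_nonpos_of_nonpos_of_nonneg h3 hn.le
      calc (1 / (n + 1 : ℝ)) * Real.exp (p.2.2 / (1 / (n + 1 : ℝ)))
          ≤ (1 / (n + 1 : ℝ)) * 1 := mul_le_mul_of_nonneg_left hexp hn.le
        _ ≤ p.1 + 1 / (n + 1 : ℝ) := by linarith
end

section
/- Let n ≥ 1, x ∈ ℝ^n, t ∈ ℝ, and y > 0. Then y·log( Σ_{i=1}^n exp(x_i/y) ) ≤ t if and only if there exists u ∈ ℝ^n with Σ_{i=1}^n u_i ≤ y and (u_i, y, x_i − t) ∈ K_exp for every i (equivalently u_i ≥ y·exp((x_i − t)/y) for every i). This is the conic representation of the perspective of the log-sum-exp function. -/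
/-- The exponential cone `K_exp ⊆ ℝ³`. -/
def expCone : Set (ℝ × ℝ × ℝ) :=
  {z : ℝ × ℝ × ℝ | 0 < z.2.1 ∧ z.2.1 * Real.exp (z.2.2 / z.2.1) ≤ z.1} ∪
    {z : ℝ × ℝ × ℝ | 0 ≤ z.1 ∧ z.2.1 = 0 ∧ z.2.2 ≤ 0}

open Finset Real

theorem mem_expCone_iff_of_pos {u y z : ℝ} (hy : 0 < y) :
    (u, y, z) ∈ expCone ↔ y * exp (z / y) ≤ u := by
  simp [expCone, hy, hy.ne']

theorem exists_sum_le_and_forall_le_iff {ι M : Type*} [Fintype ι] [AddCommMonoid M] [PartialOrder M]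
    [IsOrderedAddMonoid M] (a : ι → M) (c : M) :
    (∃ u : ι → M, ∑ i, u i ≤ c ∧ ∀ i, a i ≤ u i) ↔ ∑ i, a i ≤ c :=
  ⟨fun ⟨_, hsum, hle⟩ => (sum_le_sum fun i _ => hle i).trans hsum,
    fun h => ⟨a, h, fun _ => le_rfl⟩⟩

theorem log_sum_exp_le_iff {ι : Type*} [Fintype ι] [Nonempty ι] (x : ι → ℝ) (t : ℝ) :
    log (∑ i, exp (x i)) ≤ t ↔ ∑ i, exp (x i - t) ≤ 1 := by
  have hpos : 0 < ∑ i, exp (x i) := sum_pos (fun i _ => exp_pos _) univ_nonempty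
  simp_rw [log_le_iff_le_exp hpos, exp_sub, ← sum_div, div_le_one (exp_pos t)]

theorem mul_log_sum_exp_div_le_iff {ι : Type*} [Fintype ι] [Nonempty ι] (x : ι → ℝ)
    {t y : ℝ} (hy : 0 < y) :
    y * log (∑ i, exp (x i / y)) ≤ t ↔ ∑ i, exp ((x i - t) / y) ≤ 1 := by
  rw [mul_comm, ← le_div_iff₀ hy, log_sum_exp_le_iff]
  simp_rw [sub_div]

/-- Conic representation of the perspective of log-sum-exp:
for `y > 0`, `y · log (Σ i, exp (x i / y)) ≤ t` iff there is `u` with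
`Σ i, u i ≤ y` and `(u i, y, x i - t) ∈ K_exp` for every `i`. -/
theorem perspective_logSumExp_iff_expCone
    (n : ℕ) (hn : 1 ≤ n) (x : Fin n → ℝ) (t y : ℝ) (hy : 0 < y) :
    y * Real.log (∑ i : Fin n, Real.exp (x i / y)) ≤ t ↔
      ∃ u : Fin n → ℝ, (∑ i : Fin n, u i) ≤ y ∧
        ∀ i : Fin n, (u i, y, x i - t) ∈ expCone := by
  have : Nonempty (Fin n) := Fin.pos_iff_nonempty.mp hn
  simp_rw [mem_expCone_iff_of_pos hy]
  rw [exists_sum_le_and_forall_le_iff, mul_log_sum_exp_div_le_iff x hy, ← mul_sum,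
    mul_le_iff_le_one_right hy]
end

section
/- Let x, t ∈ ℝ and y > 0. Then y·log(1 + exp(x/y)) ≤ t if and only if there exist u, v ∈ ℝ with u + v ≤ y, (u, y, x − t) ∈ K_exp, and (v, y, −t) ∈ K_exp (equivalently u ≥ y·exp((x − t)/y) and v ≥ y·exp(−t/y)). This is the conic representation of the perspective of the softplus (logistic cost) function log(1 + e^x). -/
/-- Conic representation of the perspective of the softplus
(logistic cost) function: for `y > 0`, `y · log (1 + exp (x / y)) ≤ t` iff there
exist `u, v` with `u + v ≤ y`, `(u, y, x - t) ∈ K_exp` and `(v, y, -t) ∈ K_exp`. -/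
theorem perspective_softplus_iff_expCone
    (x t y : ℝ) (hy : 0 < y) :
    y * Real.log (1 + Real.exp (x / y)) ≤ t ↔
      ∃ u v : ℝ, u + v ≤ y ∧ (u, y, x - t) ∈ expCone ∧ (v, y, -t) ∈ expCone := by
  have hpos : (0:ℝ) < 1 + Real.exp (x / y) := by positivity
  have eq1 : Real.exp ((x - t) / y) + Real.exp (-t / y)
      = (1 + Real.exp (x / y)) * Real.exp (-(t / y)) := by
    rw [sub_div, neg_div, sub_eq_add_neg, Real.exp_add]; ring
  have key : y * Real.log (1 + Real.exp (x / y)) ≤ t ↔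
      Real.exp ((x - t) / y) + Real.exp (-t / y) ≤ 1 := by
    rw [mul_comm, ← le_div_iff₀ hy, Real.log_le_iff_le_exp hpos, eq1,
      Real.exp_neg, ← div_eq_mul_inv, div_le_one (Real.exp_pos _)]
  rw [key]
  constructor
  · intro h
    refine ⟨y * Real.exp ((x - t) / y), y * Real.exp (-t / y), ?_,
      Or.inl ⟨hy, le_rfl⟩, Or.inl ⟨hy, le_rfl⟩⟩
    nlinarith [mul_le_mul_of_nonneg_left h hy.le]
  · rintro ⟨u, v, huv, hu, hv⟩
    rcases hu with ⟨_, hu⟩ | ⟨_, hy0, _⟩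
    · rcases hv with ⟨_, hv⟩ | ⟨_, hy0, _⟩
      · simp only at hu hv
        nlinarith
      · exact absurd hy0 hy.ne'
    · exact absurd hy0 hy.ne'
end

section
/- Let n ≥ 2, let x₁, …, x_n > 0, and let t ∈ ℝ. Then |t| ≤ (∏_{i=1}^n x_i)^{1/n} if and only if there exist u₁, …, u_n ∈ ℝ with u₁ = x₁, u_n = t, and (u_{i−1}, x_i, u_i) ∈ P₃^{1 − 1/i} for every i ∈ {2, …, n}. This expresses the geometric-mean hypograph by a chain of n − 1 three-dimensional power cones. -/
/-- The three-dimensional power cone `P₃^α ⊆ ℝ³`. -/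
def powerCone3 (α : ℝ) : Set (ℝ × ℝ × ℝ) :=
  {z : ℝ × ℝ × ℝ | 0 ≤ z.1 ∧ 0 ≤ z.2.1 ∧ |z.2.2| ≤ z.1 ^ α * z.2.1 ^ (1 - α)}

private lemma chain_eq (x' : ℕ → ℝ) (hx' : ∀ i, 0 < x' i) (m : ℕ) :
    ((∏ i ∈ Finset.range (m+1), x' i) ^ ((m:ℝ)+1)⁻¹) ^ (1 - 1/((m:ℝ)+2))
        * x' (m+1) ^ (1/((m:ℝ)+2))
      = (∏ i ∈ Finset.range (m+2), x' i) ^ ((m:ℝ)+2)⁻¹ := by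
  have hP : 0 < ∏ i ∈ Finset.range (m+1), x' i :=
    Finset.prod_pos fun i _ => hx' i
  have h1 : ((∏ i ∈ Finset.range (m+1), x' i) ^ ((m:ℝ)+1)⁻¹) ^ (1 - 1/((m:ℝ)+2))
      = (∏ i ∈ Finset.range (m+1), x' i) ^ ((m:ℝ)+2)⁻¹ := by
    rw [← Real.rpow_mul hP.le]
    congr 1
    have hm1 : ((m:ℝ)+1) ≠ 0 := by positivity
    have hm2 : ((m:ℝ)+2) ≠ 0 := by positivity
    have h2 : (1:ℝ) - 1/((m:ℝ)+2) = ((m:ℝ)+1)/((m:ℝ)+2) := by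
      rw [eq_div_iff hm2, sub_mul, one_div, inv_mul_cancel₀ hm2]; ring
    rw [h2, div_eq_mul_inv, ← mul_assoc, inv_mul_cancel₀ hm1, one_mul]
  rw [h1, one_div, ← Real.mul_rpow hP.le (hx' (m+1)).le,
    Finset.prod_range_succ x' (m+1)]

/-- For `n ≥ 2` and positive `x₁, …, x_n`, the geometric-mean
hypograph `|t| ≤ (∏ i, x i)^(1/n)` is represented by a chain of `n - 1`
three-dimensional power cones: there exist `u₁, …, u_n` with `u₁ = x₁`,
`u_n = t`, and `(u_{i-1}, x_i, u_i) ∈ P₃^(1 - 1/i)` for `i = 2, …, n`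
(here written with `0`-based indices, so `i ∈ {2, …, n}` corresponds to
`j : Fin n` with `1 ≤ j` and `α = 1 - 1/(j+1)`). -/
theorem geometricMean_iff_powerCone_chain
    (n : ℕ) (hn : 2 ≤ n) (x : Fin n → ℝ) (hx : ∀ i, 0 < x i) (t : ℝ) :
    |t| ≤ (∏ i : Fin n, x i) ^ ((1 : ℝ) / n) ↔
      ∃ u : Fin n → ℝ,
        u ⟨0, by omega⟩ = x ⟨0, by omega⟩ ∧
        u ⟨n - 1, by omega⟩ = t ∧
        ∀ j : Fin n, 1 ≤ (j : ℕ) →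
          (u ⟨(j : ℕ) - 1, Nat.lt_of_le_of_lt (Nat.sub_le _ _) j.isLt⟩, x j, u j)
            ∈ powerCone3 (1 - 1 / ((j : ℕ) + 1 : ℝ)) := by
  set x' : ℕ → ℝ := fun k => if h : k < n then x ⟨k, h⟩ else 1 with hx'def
  have hx' : ∀ i, 0 < x' i := by
    intro i
    simp only [hx'def]
    split
    · exact hx _
    · exact one_pos
  have hx'eq : ∀ (k : ℕ) (h : k < n), x' k = x ⟨k, h⟩ := by
    intro k h; simp [hx'def, h]
  set v : ℕ → ℝ := fun k => (∏ i ∈ Finset.range (k+1), x' i) ^ ((k:ℝ)+1)⁻¹ with hvdef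
  have hv_pos : ∀ k, 0 < v k := by
    intro k
    have : 0 < ∏ i ∈ Finset.range (k+1), x' i := Finset.prod_pos fun i _ => hx' i
    positivity
  have hchain : ∀ m : ℕ, v m ^ (1 - 1/((m:ℝ)+2)) * x' (m+1) ^ (1/((m:ℝ)+2)) = v (m+1) := by
    intro m
    have hc : ((m+1:ℕ):ℝ) + 1 = (m:ℝ)+2 := by push_cast; ring
    simp only [hvdef]
    rw [hc]
    exact chain_eq x' hx' m
  have hv0 : v 0 = x' 0 := by
    simp [hvdef, Finset.prod_range_one]
  have hprod : (∏ i : Fin n, x i) = ∏ i ∈ Finset.range n, x' i := by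
    rw [← Fin.prod_univ_eq_prod_range]
    exact Finset.prod_congr rfl fun i _ => by rw [hx'eq i i.isLt]
  have hGM : (∏ i : Fin n, x i) ^ ((1:ℝ)/n) = v (n-1) := by
    have h1 : n - 1 + 1 = n := by omega
    have h2 : ((n-1 : ℕ):ℝ) + 1 = (n:ℝ) := by
      have : ((n-1 : ℕ):ℝ) = (n:ℝ) - 1 := by
        push_cast [Nat.cast_sub (by omega : 1 ≤ n)]; ring
      rw [this]; ring
    rw [hprod]
    show (∏ i ∈ Finset.range n, x' i) ^ ((1:ℝ)/n)
      = (∏ i ∈ Finset.range ((n-1)+1), x' i) ^ (((n-1:ℕ):ℝ)+1)⁻¹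
    rw [h1, h2, one_div]
  constructor
  · intro ht
    refine ⟨fun j => if (j:ℕ) = n - 1 then t else v (j:ℕ), ?_, ?_, ?_⟩
    · have : (0:ℕ) ≠ n - 1 := by omega
      simp only [this, if_false]
      rw [hv0, hx'eq 0 (by omega)]
    · simp
    · intro j hj
      have hjn : (j:ℕ) < n := j.isLt
      have hpred : (j:ℕ) - 1 ≠ n - 1 := by omega
      simp only [powerCone3, Set.mem_setOf_eq, hpred, if_false]
      refine ⟨(hv_pos _).le, (hx j).le, ?_⟩
      obtain ⟨m, hm⟩ : ∃ m, (j:ℕ) = m + 1 := ⟨(j:ℕ) - 1, by omega⟩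
      have hxj : x j = x' (m+1) := by
        rw [hx'eq (m+1) (hm ▸ hjn)]
        congr 1
        exact Fin.ext hm
      have hcast : ((j:ℕ):ℝ) + 1 = (m:ℝ) + 2 := by rw [hm]; push_cast; ring
      have hkey : v ((j:ℕ) - 1) ^ (1 - 1/(((j:ℕ):ℝ)+1)) * x j ^ (1 - (1 - 1/(((j:ℕ):ℝ)+1)))
          = v (j:ℕ) := by
        have : (1 : ℝ) - (1 - 1/(((j:ℕ):ℝ)+1)) = 1/(((j:ℕ):ℝ)+1) := by ring
        rw [this, hcast, hxj, hm]
        simpa using hchain m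
      by_cases hlast : (j:ℕ) = n - 1
      · rw [if_pos hlast]
        calc |t| ≤ v (n-1) := hGM ▸ ht
          _ = v ((j:ℕ)) := by rw [hlast]
          _ = _ := hkey.symm
      · rw [if_neg hlast, abs_of_nonneg (hv_pos _).le]
        exact hkey.symm.le
  · rintro ⟨u, hu0, hulast, hcone⟩
    have key : ∀ k : ℕ, ∀ hk : k < n, |u ⟨k, hk⟩| ≤ v k := by
      intro k
      induction k with
      | zero =>
        intro hk
        have : u ⟨0, hk⟩ = x ⟨0, by omega⟩ := hu0
        rw [this, hv0, hx'eq 0 (by omega)]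
        exact le_of_eq (abs_of_pos (hx _))
      | succ m ih =>
        intro hk
        have hm : m < n := by omega
        set j : Fin n := ⟨m+1, hk⟩ with hjdef
        have hcj := hcone j (by simp [hjdef])
        simp only [powerCone3, Set.mem_setOf_eq, hjdef] at hcj
        obtain ⟨h1, h2, h3⟩ := hcj
        have hpred : (m + 1) - 1 = m := rfl
        have hprev : u ⟨m, hm⟩ ≤ v m := le_trans (le_abs_self _) (ih hm)
        have hxj : x j = x' (m+1) := by
          rw [hx'eq (m+1) hk]
        have hα : (1 : ℝ) - 1 / (((m+1 : ℕ):ℝ) + 1) = 1 - 1/((m:ℝ)+2) := by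
          push_cast; ring
        have hαnn : (0:ℝ) ≤ 1 - 1/((m:ℝ)+2) := by
          have : (1:ℝ)/((m:ℝ)+2) ≤ 1 := by
            rw [div_le_one (by positivity)]
            linarith [Nat.cast_nonneg (α := ℝ) m]
          linarith
        calc |u ⟨m+1, hk⟩|
            ≤ (u ⟨m, hm⟩) ^ ((1:ℝ) - 1 / (((m+1 : ℕ):ℝ) + 1))
                * x j ^ (1 - ((1:ℝ) - 1 / (((m+1 : ℕ):ℝ) + 1))) := h3
          _ ≤ v m ^ (1 - 1/((m:ℝ)+2)) * x' (m+1) ^ (1/((m:ℝ)+2)) := by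
              rw [hα, hxj]
              have h1' : (1:ℝ) - (1 - 1/((m:ℝ)+2)) = 1/((m:ℝ)+2) := by ring
              rw [h1']
              exact mul_le_mul_of_nonneg_right
                (Real.rpow_le_rpow h1 hprev hαnn)
                (Real.rpow_nonneg (hx' _).le _)
          _ = v (m+1) := hchain m
    have := key (n-1) (by omega)
    rw [hulast] at this
    rw [hGM]
    exact this
end
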